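/- Assume hypotheses (H1) and (H2), and assume Γ* > 0. Define Θ = min over constants C₁,…,C_I ∈ [0,1] and functions h : X* → [0,1] with h ≡ 1 on X_□, h ≡ 0 on X_⊞, and h ≡ C_i on X_i for each i = 1,…,I, of ½ Σ_{η,η' ∈ X*, η ∼ η'} (h(η) − h(η'))². Then Θ ∈ (0,∞) and lim_{β→∞} e^{Γ*β} · Z_β · CAP_β({□},{⊞}) = Θ. -/

import Mathlib

open scoped Classical

variable {X : Type*}

/-- `ω` (restricted to 0,…,L) is a path of allowed moves from `a` to `b`. -/
def IsPathW (rel : X → X → Prop) (a b : X) (L : ℕ) (ω : ℕ → X) : Prop :=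
  ω 0 = a ∧ ω L = b ∧ ∀ i < L, rel (ω i) (ω (i + 1))

/-- The maximal energy along the path `ω = (ω 0, …, ω L)`. -/
noncomputable def pathMax (H : X → ℝ) (L : ℕ) (ω : ℕ → X) : ℝ :=
  (Finset.range (L + 1)).sup' ⟨0, by simp⟩ fun i => H (ω i)

/-- Communication height Φ(a,b) between two configurations. -/
noncomputable def commH (rel : X → X → Prop) (H : X → ℝ) (a b : X) : ℝ :=
  sInf { m : ℝ | ∃ L ω, IsPathW rel a b L ω ∧ m = pathMax H L ω }

/-- Communication height Φ(A,B) between two sets of configurations. -/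
noncomputable def commHS (rel : X → X → Prop) (H : X → ℝ) (A B : Set X) : ℝ :=
  sInf { m : ℝ | ∃ a ∈ A, ∃ b ∈ B, m = commH rel H a b }

/-- The graph (X,∼) is connected. -/
def ConnGraph (rel : X → X → Prop) : Prop :=
  ∀ a b : X, ∃ L ω, IsPathW rel a b L ω

/-- Partition function Z_β. -/
noncomputable def Zb [Fintype X] (H : X → ℝ) (β : ℝ) : ℝ :=
  ∑ ξ : X, Real.exp (-β * H ξ)

/-- Gibbs measure μ_β. -/
noncomputable def gibbs [Fintype X] (H : X → ℝ) (β : ℝ) (η : X) : ℝ :=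
  Real.exp (-β * H η) / Zb H β

/-- Metropolis transition rates c_β. -/
noncomputable def crate (rel : X → X → Prop) (H : X → ℝ) (β : ℝ) (η η' : X) : ℝ :=
  if rel η η' then Real.exp (-β * max (H η' - H η) 0) else 0

/-- Dirichlet form E_β(h). -/
noncomputable def dirE [Fintype X] (rel : X → X → Prop) (H : X → ℝ) (β : ℝ)
    (h : X → ℝ) : ℝ :=
  (1 / 2) * ∑ η : X, ∑ η' : X, gibbs H β η * crate rel H β η η' * (h η - h η') ^ 2

/-- Capacity CAP_β(A,B). -/
noncomputable def capB [Fintype X] (rel : X → X → Prop) (H : X → ℝ) (β : ℝ)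
    (A B : Set X) : ℝ :=
  sInf { e : ℝ | ∃ h : X → ℝ, (∀ η, 0 ≤ h η ∧ h η ≤ 1) ∧
    (∀ η ∈ A, h η = 1) ∧ (∀ η ∈ B, h η = 0) ∧ e = dirE rel H β h }

/-- `a` and `b` are connected by a path staying inside `S`. -/
def connIn (rel : X → X → Prop) (S : Set X) (a b : X) : Prop :=
  ∃ L ω, IsPathW rel a b L ω ∧ ∀ i ≤ L, ω i ∈ S

/-- Γ* = Φ(□,⊞) − H(□). -/
noncomputable def gammaStar (rel : X → X → Prop) (H : X → ℝ) (a b : X) : ℝ :=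
  commH rel H a b - H a

/-- X** = {η : H(η) < Γ*}. -/
noncomputable def Xss (rel : X → X → Prop) (H : X → ℝ) (a b : X) : Set X :=
  {η : X | H η < gammaStar rel H a b}

/-- The connected component of X** containing `root`. -/
noncomputable def compOf (rel : X → X → Prop) (H : X → ℝ) (a b root : X) : Set X :=
  {η : X | connIn rel (Xss rel H a b) root η}

/-- The wells: X** ∖ (X_□ ∪ X_⊞); its connected components are X_1,…,X_I. -/
noncomputable def wellsSet (rel : X → X → Prop) (H : X → ℝ) (a b : X) : Set X :=
  Xss rel H a b \ (compOf rel H a b a ∪ compOf rel H a b b)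

/-- Θ: the minimum of ½ Σ_{η,η'∈X*, η∼η'} (h(η)−h(η'))² over h : X* → [0,1]
with h ≡ 1 on X_□, h ≡ 0 on X_⊞ and h constant on each well X_i. -/
noncomputable def thetaVP [Fintype X] (rel : X → X → Prop) (H : X → ℝ)
    (a b : X) : ℝ :=
  sInf { e : ℝ | ∃ h : X → ℝ, (∀ η, 0 ≤ h η ∧ h η ≤ 1) ∧
    (∀ η ∈ compOf rel H a b a, h η = 1) ∧
    (∀ η ∈ compOf rel H a b b, h η = 0) ∧
    (∀ η η', connIn rel (wellsSet rel H a b) η η' → h η = h η') ∧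
    e = (1 / 2) * ∑ η : X, ∑ η' : X,
      (if H η ≤ gammaStar rel H a b ∧ H η' ≤ gammaStar rel H a b ∧ rel η η'
       then (h η - h η') ^ 2 else 0) }

/-!
Multiplying the Dirichlet form by `e^{Γ*β} Z_β` gives the edge `x ∼ y` the weight
`e^{-β (max (H x) (H y) - Γ*)}`. This weight is `1` on edges of X* at height Γ*, tends to `0` on
edges above Γ* and to `∞` on edges inside X**. A Θ-admissible function is constant across the
last kind of edges, which gives the upper bound. Conversely, a capacity test function whose
rescaled energy stays below Θ oscillates by `O(e^{-βg/2})` across edges of X**, `g` being the gap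
between Γ* and the energies in X**; collapsing each component of X** to one point turns it into a
Θ-admissible function at a cost that vanishes as `β → ∞`, which gives the lower bound.
Finally `Θ > 0`: along an optimal path from □ to ⊞ of length `L`, some step of a Θ-admissible
function is at least `1 / L`.
-/

open Filter Topology

section Paths
variable {rel : X → X → Prop} {S T : Set X} {a b c : X}

lemma connIn_mem_left (h : connIn rel S a b) : a ∈ S := by
  obtain ⟨L, ω, ⟨rfl, -, -⟩, hmem⟩ := h
  exact hmem 0 L.zero_le

lemma connIn_mem_right (h : connIn rel S a b) : b ∈ S := by
  obtain ⟨L, ω, ⟨-, rfl, -⟩, hmem⟩ := h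
  exact hmem L le_rfl

lemma connIn_mono (hST : S ⊆ T) (h : connIn rel S a b) : connIn rel T a b :=
  let ⟨L, ω, hp, hmem⟩ := h
  ⟨L, ω, hp, fun i hi => hST (hmem i hi)⟩

lemma connIn_iff_reflTransGen : connIn rel S a b ↔
    a ∈ S ∧ Relation.ReflTransGen (fun x y => x ∈ S ∧ y ∈ S ∧ rel x y) a b := by
  constructor
  · rintro ⟨L, ω, ⟨rfl, rfl, hstep⟩, hmem⟩
    refine ⟨hmem 0 L.zero_le, ?_⟩
    induction L with
    | zero => rfl
    | succ n ih =>
      exact (ih (fun i hi => hmem i (by omega)) fun i hi => hstep i (by omega)).tail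
        ⟨hmem n (by omega), hmem (n + 1) le_rfl, hstep n n.lt_succ_self⟩
  · rintro ⟨ha, hab⟩
    induction hab with
    | refl =>
      exact ⟨0, fun _ => a, ⟨rfl, rfl, fun i hi => absurd hi i.not_lt_zero⟩, fun _ _ => ha⟩
    | @tail y z _ hyz ih =>
      obtain ⟨L, ω, ⟨h0, hL, hstep⟩, hmem⟩ := ih
      refine ⟨L + 1, Function.update ω (L + 1) z,
        ⟨by rw [Function.update_of_ne (by omega), h0], by simp, fun i hi => ?_⟩,
        fun i hi => ?_⟩
      · rw [Function.update_of_ne (by omega : i ≠ L + 1)]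
        rcases (Nat.lt_succ_iff.1 hi).lt_or_eq with hi | rfl
        · rw [Function.update_of_ne (by omega)]
          exact hstep i hi
        · rw [Function.update_self, hL]
          exact hyz.2.2
      · rcases hi.lt_or_eq with hi | rfl
        · rw [Function.update_of_ne (by omega)]
          exact hmem i (by omega)
        · rw [Function.update_self]
          exact hyz.2.1

lemma connIn_self (ha : a ∈ S) : connIn rel S a a :=
  connIn_iff_reflTransGen.2 ⟨ha, .refl⟩

lemma connIn_of_rel (ha : a ∈ S) (hb : b ∈ S) (hr : rel a b) : connIn rel S a b :=
  connIn_iff_reflTransGen.2 ⟨ha, .single ⟨ha, hb, hr⟩⟩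

lemma connIn_trans (hab : connIn rel S a b) (hbc : connIn rel S b c) : connIn rel S a c :=
  connIn_iff_reflTransGen.2
    ⟨connIn_mem_left hab,
      (connIn_iff_reflTransGen.1 hab).2.trans (connIn_iff_reflTransGen.1 hbc).2⟩

lemma connIn_symm (hsymm : Symmetric rel) (h : connIn rel S a b) : connIn rel S b a :=
  connIn_iff_reflTransGen.2 ⟨connIn_mem_right h,
    Relation.ReflTransGen.mono (fun _ _ ⟨hy, hx, hr⟩ => ⟨hx, hy, hsymm hr⟩) _ _
      (Relation.ReflTransGen.swap _ _ (connIn_iff_reflTransGen.1 h).2)⟩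

lemma connIn_step (hab : connIn rel S a b) (hc : c ∈ S) (hr : rel b c) : connIn rel S a c :=
  connIn_trans hab (connIn_of_rel (connIn_mem_right hab) hc hr)

lemma abs_sub_le_mul_of_forall_lt (f : ℕ → ℝ) (L : ℕ) {d : ℝ}
    (hd : ∀ i < L, |f i - f (i + 1)| ≤ d) : |f 0 - f L| ≤ L * d := by
  simpa [Real.dist_eq] using dist_le_range_sum_of_dist_le (f := f) L (d := fun _ => d)
    fun hk => by simpa [Real.dist_eq] using hd _ hk

/-- On a finite set of configurations, path lengths inside `S` can be bounded uniformly. -/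
lemma exists_connIn_oscillation_le [Finite X] (rel : X → X → Prop) (S : Set X) :
    ∃ N : ℕ, ∀ (f : X → ℝ) (d : ℝ), 0 ≤ d →
      (∀ x ∈ S, ∀ y ∈ S, rel x y → |f x - f y| ≤ d) →
      ∀ x y, connIn rel S x y → |f x - f y| ≤ N * d := by
  have hlen : ∀ p : X × X, ∃ L : ℕ, connIn rel S p.1 p.2 →
      ∃ ω, IsPathW rel p.1 p.2 L ω ∧ ∀ i ≤ L, ω i ∈ S := by
    intro p
    by_cases hp : connIn rel S p.1 p.2
    · obtain ⟨L, ω, h⟩ := hp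
      exact ⟨L, fun _ => ⟨ω, h⟩⟩
    · exact ⟨0, fun h => (hp h).elim⟩
  choose len hlen using hlen
  obtain ⟨N, hN⟩ := (Set.finite_range len).bddAbove
  refine ⟨N, fun f d hd hedge x y hxy => ?_⟩
  obtain ⟨ω, ⟨h0, hL, hstep⟩, hmem⟩ : ∃ ω, IsPathW rel x y (len (x, y)) ω ∧
      ∀ i ≤ len (x, y), ω i ∈ S := hlen (x, y) hxy
  calc |f x - f y| = |(f ∘ ω) 0 - (f ∘ ω) (len (x, y))| := by simp [h0, hL]
    _ ≤ len (x, y) * d := abs_sub_le_mul_of_forall_lt (f ∘ ω) _ fun i hi =>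
          hedge _ (hmem i hi.le) _ (hmem (i + 1) hi) (hstep i hi)
    _ ≤ N * d := by gcongr; exact hN ⟨_, rfl⟩

end Paths

section Heights
variable {rel : X → X → Prop} {H : X → ℝ} {a b : X}

lemma exists_eq_pathMax (H : X → ℝ) (L : ℕ) (ω : ℕ → X) :
    ∃ i ≤ L, H (ω i) = pathMax H L ω := by
  obtain ⟨i, hi, heq⟩ :=
    Finset.exists_mem_eq_sup' Finset.nonempty_range_add_one fun i => H (ω i)
  exact ⟨i, Nat.lt_succ_iff.1 (Finset.mem_range.1 hi), heq.symm⟩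

lemma le_pathMax (H : X → ℝ) {L i : ℕ} (ω : ℕ → X) (hi : i ≤ L) :
    H (ω i) ≤ pathMax H L ω :=
  Finset.le_sup' (fun j => H (ω j)) (Finset.mem_range.2 (by omega))

lemma finite_pathMax [Finite X] (rel : X → X → Prop) (H : X → ℝ) (a b : X) :
    {m : ℝ | ∃ L ω, IsPathW rel a b L ω ∧ m = pathMax H L ω}.Finite := by
  refine (Set.finite_range H).subset ?_
  rintro _ ⟨L, ω, -, rfl⟩
  obtain ⟨i, -, hi⟩ := exists_eq_pathMax H L ω
  exact ⟨ω i, hi⟩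

lemma commH_le_pathMax [Finite X] {L : ℕ} {ω : ℕ → X} (hp : IsPathW rel a b L ω) :
    commH rel H a b ≤ pathMax H L ω :=
  csInf_le (finite_pathMax rel H a b).bddBelow ⟨L, ω, hp, rfl⟩

lemma exists_pathMax_eq_commH [Finite X] (hconn : ConnGraph rel) (H : X → ℝ) (a b : X) :
    ∃ L ω, IsPathW rel a b L ω ∧ pathMax H L ω = commH rel H a b := by
  obtain ⟨L, ω, hp⟩ := hconn a b
  have hne : {m : ℝ | ∃ L ω, IsPathW rel a b L ω ∧ m = pathMax H L ω}.Nonempty :=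
    ⟨_, L, ω, hp, rfl⟩
  obtain ⟨L, ω, hp, hm⟩ := hne.csInf_mem (finite_pathMax rel H a b)
  exact ⟨L, ω, hp, hm.symm⟩

end Heights

section EdgeEnergy
variable [Fintype X] {w w' : X → X → ℝ} {f g : X → ℝ}

noncomputable def edgeEnergy (w : X → X → ℝ) (f : X → ℝ) : ℝ :=
  1 / 2 * ∑ x, ∑ y, w x y * (f x - f y) ^ 2

lemma edgeEnergy_nonneg (hw : ∀ x y, 0 ≤ w x y) : 0 ≤ edgeEnergy w f := by
  unfold edgeEnergy
  exact mul_nonneg (by norm_num) (Finset.sum_nonneg fun x _ => Finset.sum_nonneg fun y _ =>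
    mul_nonneg (hw x y) (sq_nonneg _))

lemma edgeEnergy_mono (hww' : ∀ x y, w x y ≤ w' x y) : edgeEnergy w f ≤ edgeEnergy w' f := by
  unfold edgeEnergy
  gcongr with x _ y _
  exact hww' x y

lemma mul_sq_sub_le_edgeEnergy (hw : ∀ x y, 0 ≤ w x y) (x y : X) :
    w x y * (f x - f y) ^ 2 ≤ 2 * edgeEnergy w f := by
  have hterm : ∀ x y, 0 ≤ w x y * (f x - f y) ^ 2 := fun x y =>
    mul_nonneg (hw x y) (sq_nonneg _)
  calc w x y * (f x - f y) ^ 2 ≤ ∑ y', w x y' * (f x - f y') ^ 2 :=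
        Finset.single_le_sum (fun y' _ => hterm x y') (Finset.mem_univ y)
    _ ≤ ∑ x', ∑ y', w x' y' * (f x' - f y') ^ 2 :=
        Finset.single_le_sum (f := fun x' => ∑ y', w x' y' * (f x' - f y') ^ 2)
          (fun x' _ => Finset.sum_nonneg fun y' _ => hterm x' y') (Finset.mem_univ x)
    _ = 2 * edgeEnergy w f := by rw [edgeEnergy]; ring

/-- For `[0,1]`-valued functions, `u² - v² = (u - v)(u + v)` with `|u + v| ≤ 2`. -/
lemma edgeEnergy_le_add_of_abs_sub_le (hw : ∀ x y, 0 ≤ w x y)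
    (hf : ∀ x, 0 ≤ f x ∧ f x ≤ 1) (hg : ∀ x, 0 ≤ g x ∧ g x ≤ 1) {D : ℝ}
    (hfg : ∀ x, |g x - f x| ≤ D) :
    edgeEnergy w g ≤ edgeEnergy w f + 2 * D * ∑ x, ∑ y, w x y := by
  have hsq : ∀ x y, (g x - g y) ^ 2 ≤ (f x - f y) ^ 2 + 4 * D := by
    intro x y
    have hdiff : |(g x - g y) - (f x - f y)| ≤ 2 * D := by
      calc |(g x - g y) - (f x - f y)| = |(g x - f x) - (g y - f y)| := by ring_nf
        _ ≤ |g x - f x| + |g y - f y| := abs_sub _ _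
        _ ≤ 2 * D := by linarith [hfg x, hfg y]
    have hsum : |(g x - g y) + (f x - f y)| ≤ 2 := by
      rw [abs_le]
      constructor <;> linarith [hf x, hf y, hg x, hg y]
    calc (g x - g y) ^ 2
        = (f x - f y) ^ 2 + ((g x - g y) - (f x - f y)) * ((g x - g y) + (f x - f y)) := by
          ring
      _ ≤ (f x - f y) ^ 2 + |(g x - g y) - (f x - f y)| * |(g x - g y) + (f x - f y)| := by
          rw [← abs_mul]; gcongr; exact le_abs_self _
      _ ≤ (f x - f y) ^ 2 + 2 * D * 2 := by gcongr; exact (abs_nonneg _).trans hdiff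
      _ = (f x - f y) ^ 2 + 4 * D := by ring
  calc edgeEnergy w g ≤ 1 / 2 * ∑ x, ∑ y, (w x y * (f x - f y) ^ 2 + 4 * D * w x y) := by
        unfold edgeEnergy
        gcongr with x _ y _
        nlinarith [hw x y, hsq x y]
    _ = edgeEnergy w f + 2 * D * ∑ x, ∑ y, w x y := by
        simp only [edgeEnergy, Finset.sum_add_distrib, ← Finset.mul_sum]
        ring

lemma tendsto_edgeEnergy {ι : Type*} {l : Filter ι} {w : ι → X → X → ℝ} {w₀ : X → X → ℝ}
    (h : ∀ x y,
      Tendsto (fun i => w i x y * (f x - f y) ^ 2) l (𝓝 (w₀ x y * (f x - f y) ^ 2))) :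
    Tendsto (fun i => edgeEnergy (w i) f) l (𝓝 (edgeEnergy w₀ f)) :=
  (tendsto_finsetSum _ fun x _ => tendsto_finsetSum _ fun y _ => h x y).const_mul _

end EdgeEnergy

section Conductance
variable (rel : X → X → Prop) (H : X → ℝ) (Γ : ℝ)

/-- `e^{Γβ} Z_β μ_β(x) c_β(x,y)`, by `exp_mul_Zb_mul_dirE`. -/
noncomputable def scaledConductance (β : ℝ) (x y : X) : ℝ :=
  if rel x y then Real.exp (-β * (max (H x) (H y) - Γ)) else 0

noncomputable def limitConductance (x y : X) : ℝ :=
  if H x ≤ Γ ∧ H y ≤ Γ ∧ rel x y then 1 else 0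

variable {rel H Γ}

lemma scaledConductance_nonneg (β : ℝ) (x y : X) : 0 ≤ scaledConductance rel H Γ β x y := by
  unfold scaledConductance; split_ifs <;> positivity

lemma limitConductance_nonneg (x y : X) : 0 ≤ limitConductance rel H Γ x y := by
  unfold limitConductance; split_ifs <;> norm_num

lemma Zb_pos [Fintype X] [Nonempty X] (H : X → ℝ) (β : ℝ) : 0 < Zb H β :=
  Finset.sum_pos (fun _ _ => Real.exp_pos _) Finset.univ_nonempty

lemma exp_mul_Zb_mul_dirE [Fintype X] [Nonempty X] (β : ℝ) (f : X → ℝ) :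
    Real.exp (Γ * β) * Zb H β * dirE rel H β f =
      edgeEnergy (scaledConductance rel H Γ β) f := by
  have hZ := Zb_pos H β
  have hterm : ∀ x y, Real.exp (Γ * β) * Zb H β * (gibbs H β x * crate rel H β x y) =
      scaledConductance rel H Γ β x y := by
    intro x y
    unfold gibbs crate scaledConductance
    split_ifs
    · have hmax : H x + max (H y - H x) 0 = max (H x) (H y) := by
        rw [← max_add_add_left, add_sub_cancel, add_zero, max_comm]
      calc Real.exp (Γ * β) * Zb H β * (Real.exp (-β * H x) / Zb H β *
            Real.exp (-β * max (H y - H x) 0))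
          = Real.exp (Γ * β + -β * H x + -β * max (H y - H x) 0) := by
            rw [Real.exp_add, Real.exp_add]; field_simp
        _ = Real.exp (-β * (max (H x) (H y) - Γ)) := by rw [← hmax]; ring_nf
    · simp
  unfold dirE edgeEnergy
  rw [mul_left_comm, Finset.mul_sum]
  congr 1
  refine Finset.sum_congr rfl fun x _ => ?_
  rw [Finset.mul_sum]
  refine Finset.sum_congr rfl fun y _ => ?_
  rw [← hterm]
  ring

lemma limitConductance_le_scaledConductance {β : ℝ} (hβ : 0 ≤ β) (x y : X) :
    limitConductance rel H Γ x y ≤ scaledConductance rel H Γ β x y := by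
  unfold limitConductance
  split_ifs with h
  · rw [scaledConductance, if_pos h.2.2, ← Real.exp_zero]
    exact Real.exp_le_exp.2 (mul_nonneg_of_nonpos_of_nonpos (by linarith)
      (by linarith [max_le h.1 h.2.1]))
  · exact scaledConductance_nonneg β x y

lemma exp_mul_le_scaledConductance {β g : ℝ} (hβ : 0 ≤ β) {x y : X} (hr : rel x y)
    (hx : g ≤ Γ - H x) (hy : g ≤ Γ - H y) :
    Real.exp (β * g) ≤ scaledConductance rel H Γ β x y := by
  rw [scaledConductance, if_pos hr]
  refine Real.exp_le_exp.2 ?_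
  rcases max_choice (H x) (H y) with h | h <;> rw [h] <;> nlinarith

lemma tendsto_scaledConductance {x y : X} (hr : rel x y) (hΓ : Γ ≤ max (H x) (H y)) :
    Tendsto (fun β => scaledConductance rel H Γ β x y) atTop
      (𝓝 (limitConductance rel H Γ x y)) := by
  simp only [scaledConductance, limitConductance, if_pos hr]
  rcases hΓ.eq_or_lt with heq | hlt
  · rw [if_pos ⟨(le_max_left _ _).trans heq.ge, (le_max_right _ _).trans heq.ge, hr⟩, ← heq]
    simp
  · rw [if_neg fun h => hlt.not_ge (max_le h.1 h.2.1)]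
    have : Tendsto (fun β => β * (max (H x) (H y) - Γ)) atTop atTop :=
      tendsto_id.atTop_mul_const (sub_pos.2 hlt)
    exact (Real.tendsto_exp_neg_atTop_nhds_zero.comp this).congr fun β => by
      simp only [Function.comp, neg_mul]

end Conductance

lemma exists_pos_le_sub_of_lt [Finite X] (H : X → ℝ) (c : ℝ) :
    ∃ g > 0, ∀ x, H x < c → g ≤ c - H x := by
  cases isEmpty_or_nonempty {x // H x < c} with
  | inl h => exact ⟨1, one_pos, fun x hx => (h.false ⟨x, hx⟩).elim⟩
  | inr h =>
    obtain ⟨x₀, hx₀⟩ := Finite.exists_min fun x : {x // H x < c} => c - H x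
    exact ⟨c - H x₀, sub_pos.2 x₀.2, fun x hx => hx₀ ⟨x, hx⟩⟩

section Capacity
variable [Fintype X] [Nonempty X] {rel : X → X → Prop} {H : X → ℝ} {A B : Set X}

def IsCapAdmissible (A B : Set X) (f : X → ℝ) : Prop :=
  (∀ η, 0 ≤ f η ∧ f η ≤ 1) ∧ (∀ η ∈ A, f η = 1) ∧ (∀ η ∈ B, f η = 0)

lemma exp_mul_Zb_mul_capB (rel : X → X → Prop) (H : X → ℝ) (Γ β : ℝ) (A B : Set X) :
    Real.exp (Γ * β) * Zb H β * capB rel H β A B =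
      sInf (edgeEnergy (scaledConductance rel H Γ β) '' {f | IsCapAdmissible A B f}) := by
  have hk : 0 ≤ Real.exp (Γ * β) * Zb H β := (mul_pos (Real.exp_pos _) (Zb_pos H β)).le
  rw [capB, ← smul_eq_mul, ← Real.sInf_smul_of_nonneg hk]
  congr 1
  ext e
  simp only [Set.mem_smul_set, Set.mem_image, IsCapAdmissible,
    ← exp_mul_Zb_mul_dirE, smul_eq_mul]
  constructor
  · rintro ⟨_, ⟨f, h1, h2, h3, rfl⟩, rfl⟩
    exact ⟨f, ⟨h1, h2, h3⟩, rfl⟩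
  · rintro ⟨f, ⟨h1, h2, h3⟩, rfl⟩
    exact ⟨_, ⟨f, h1, h2, h3, rfl⟩, rfl⟩

lemma scaledCap_le {Γ β : ℝ} {f : X → ℝ} (hf : IsCapAdmissible A B f) :
    Real.exp (Γ * β) * Zb H β * capB rel H β A B ≤
      edgeEnergy (scaledConductance rel H Γ β) f := by
  rw [exp_mul_Zb_mul_capB]
  exact csInf_le
    ⟨0, Set.forall_mem_image.2 fun f _ => edgeEnergy_nonneg (scaledConductance_nonneg β)⟩
    (Set.mem_image_of_mem _ hf)

lemma le_scaledCap {Γ β c : ℝ} (hAB : Disjoint A B)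
    (h : ∀ f, IsCapAdmissible A B f → c ≤ edgeEnergy (scaledConductance rel H Γ β) f) :
    c ≤ Real.exp (Γ * β) * Zb H β * capB rel H β A B := by
  have hind : IsCapAdmissible A B fun x => if x ∈ A then 1 else 0 := by
    refine ⟨fun x => by dsimp only; split_ifs <;> norm_num, fun x hx => if_pos hx,
      fun x hx => if_neg (Set.disjoint_right.1 hAB hx)⟩
  rw [exp_mul_Zb_mul_capB]
  exact le_csInf (Set.Nonempty.image _ (s := {f | IsCapAdmissible A B f}) ⟨_, hind⟩)
    (Set.forall_mem_image.2 h)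

end Capacity

section Components
variable {rel : X → X → Prop} {H : X → ℝ} {a b : X} {f : X → ℝ}

lemma gammaStar_eq_commH (ha : H a = 0) : gammaStar rel H a b = commH rel H a b := by
  rw [gammaStar, ha, sub_zero]

lemma not_connIn_Xss [Finite X] (ha : H a = 0) : ¬connIn rel (Xss rel H a b) a b := by
  rintro ⟨L, ω, hp, hmem⟩
  obtain ⟨i, hi, heq⟩ := exists_eq_pathMax H L ω
  have hlt : H (ω i) < commH rel H a b := gammaStar_eq_commH ha ▸ hmem i hi
  linarith [commH_le_pathMax (H := H) hp]

lemma disjoint_compOf [Finite X] (hsymm : Symmetric rel) (ha : H a = 0) :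
    Disjoint (compOf rel H a b a) (compOf rel H a b b) :=
  Set.disjoint_left.2 fun _ hxa hxb => not_connIn_Xss ha (connIn_trans hxa (connIn_symm hsymm hxb))

variable (rel H a b) in
def IsThetaAdmissible (f : X → ℝ) : Prop :=
  (∀ η, 0 ≤ f η ∧ f η ≤ 1) ∧ (∀ η ∈ compOf rel H a b a, f η = 1) ∧
    (∀ η ∈ compOf rel H a b b, f η = 0) ∧
    ∀ η η', connIn rel (wellsSet rel H a b) η η' → f η = f η'

lemma IsThetaAdmissible.isCapAdmissible (hf : IsThetaAdmissible rel H a b f)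
    (ha : a ∈ Xss rel H a b) (hb : b ∈ Xss rel H a b) : IsCapAdmissible {a} {b} f :=
  ⟨hf.1, by simpa using hf.2.1 a (connIn_self ha), by simpa using hf.2.2.1 b (connIn_self hb)⟩

/-- X_□, X_⊞ and the wells are unions of components of X**. -/
lemma IsThetaAdmissible.eq_of_rel (hsymm : Symmetric rel) (hf : IsThetaAdmissible rel H a b f)
    {x y : X} (hx : x ∈ Xss rel H a b) (hy : y ∈ Xss rel H a b) (hr : rel x y) : f x = f y := by
  obtain ⟨-, h1, h0, hwell⟩ := hf
  by_cases hxa : x ∈ compOf rel H a b a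
  · rw [h1 x hxa, h1 y (connIn_step hxa hy hr)]
  by_cases hxb : x ∈ compOf rel H a b b
  · rw [h0 x hxb, h0 y (connIn_step hxb hy hr)]
  have hya : y ∉ compOf rel H a b a := fun h => hxa (connIn_step h hx (hsymm hr))
  have hyb : y ∉ compOf rel H a b b := fun h => hxb (connIn_step h hx (hsymm hr))
  exact hwell x y
    (connIn_of_rel ⟨hx, fun h => h.elim hxa hxb⟩ ⟨hy, fun h => h.elim hya hyb⟩ hr)

variable (rel H a b) in
noncomputable def collapse [Nonempty X] (x : X) : X :=
  if x ∈ compOf rel H a b a then a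
  else if x ∈ compOf rel H a b b then b
  else if x ∈ Xss rel H a b then Classical.epsilon (connIn rel (Xss rel H a b) x)
  else x

lemma collapse_eq_or_connIn [Nonempty X] (hsymm : Symmetric rel) (x : X) :
    collapse rel H a b x = x ∨ connIn rel (Xss rel H a b) x (collapse rel H a b x) := by
  unfold collapse
  split_ifs with hxa hxb hx
  · exact .inr (connIn_symm hsymm hxa)
  · exact .inr (connIn_symm hsymm hxb)
  · exact .inr (Classical.epsilon_spec ⟨x, connIn_self hx⟩)
  · exact .inl rfl

lemma IsCapAdmissible.isThetaAdmissible_comp_collapse [Finite X] [Nonempty X]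
    (hsymm : Symmetric rel) (ha : H a = 0) (hf : IsCapAdmissible {a} {b} f) :
    IsThetaAdmissible rel H a b (f ∘ collapse rel H a b) := by
  obtain ⟨hf01, hfa, hfb⟩ := hf
  refine ⟨fun x => hf01 _, fun x hx => ?_, fun x hx => ?_, fun x y hxy => ?_⟩
  · simp [collapse, if_pos hx, hfa]
  · simp [collapse, Set.disjoint_right.1 (disjoint_compOf hsymm ha) hx, if_pos hx, hfb]
  · obtain ⟨hx, hxab⟩ := connIn_mem_left hxy
    obtain ⟨hy, hyab⟩ := connIn_mem_right hxy
    have hxy' := connIn_mono Set.sdiff_subset hxy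
    have hcomp : connIn rel (Xss rel H a b) x = connIn rel (Xss rel H a b) y :=
      funext fun z => propext ⟨connIn_trans (connIn_symm hsymm hxy'), connIn_trans hxy'⟩
    simp only [Function.comp, collapse, if_neg fun h => hxab (.inl h),
      if_neg fun h => hxab (.inr h), if_neg fun h => hyab (.inl h),
      if_neg fun h => hyab (.inr h), if_pos hx, if_pos hy, hcomp]

end Components

section Theta
variable [Fintype X] {rel : X → X → Prop} {H : X → ℝ} {a b : X} {f : X → ℝ}

lemma thetaVP_eq_sInf_image : thetaVP rel H a b =
    sInf (edgeEnergy (limitConductance rel H (gammaStar rel H a b)) ''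
      {f | IsThetaAdmissible rel H a b f}) := by
  have henergy : ∀ f : X → ℝ, edgeEnergy (limitConductance rel H (gammaStar rel H a b)) f =
      1 / 2 * ∑ η, ∑ η',
        if H η ≤ gammaStar rel H a b ∧ H η' ≤ gammaStar rel H a b ∧ rel η η'
        then (f η - f η') ^ 2 else 0 := fun f => by
    simp only [edgeEnergy, limitConductance, ite_mul, one_mul, zero_mul]
  unfold thetaVP
  congr 1
  ext e
  simp only [Set.mem_image, IsThetaAdmissible, henergy]
  constructor
  · rintro ⟨f, h1, h2, h3, h4, rfl⟩
    exact ⟨f, ⟨h1, h2, h3, h4⟩, rfl⟩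
  · rintro ⟨f, ⟨h1, h2, h3, h4⟩, rfl⟩
    exact ⟨f, h1, h2, h3, h4, rfl⟩

lemma nonempty_setOf_isThetaAdmissible (hsymm : Symmetric rel) (ha : H a = 0) :
    {f | IsThetaAdmissible rel H a b f}.Nonempty := by
  refine ⟨fun x => if x ∈ compOf rel H a b a then 1 else 0, fun x => by
    dsimp only; split_ifs <;> norm_num, fun x hx => if_pos hx,
    fun x hx => if_neg (Set.disjoint_right.1 (disjoint_compOf hsymm ha) hx), fun x y hxy => ?_⟩
  simp only [if_neg fun h => (connIn_mem_left hxy).2 (.inl h),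
    if_neg fun h => (connIn_mem_right hxy).2 (.inl h)]

lemma thetaVP_le (hf : IsThetaAdmissible rel H a b f) :
    thetaVP rel H a b ≤ edgeEnergy (limitConductance rel H (gammaStar rel H a b)) f := by
  rw [thetaVP_eq_sInf_image]
  exact csInf_le
    ⟨0, Set.forall_mem_image.2 fun f _ => edgeEnergy_nonneg limitConductance_nonneg⟩
    (Set.mem_image_of_mem _ hf)

lemma thetaVP_pos (hsymm : Symmetric rel) (hconn : ConnGraph rel) (hab : a ≠ b) (ha : H a = 0)
    (hΓ : 0 < gammaStar rel H a b) (hb : H b < gammaStar rel H a b) : 0 < thetaVP rel H a b := by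
  obtain ⟨L, ω, ⟨h0, hL, hstep⟩, hmax⟩ := exists_pathMax_eq_commH hconn H a b
  have hLpos : 0 < L := Nat.pos_of_ne_zero fun h => hab (by rw [← h0, ← hL, h])
  have hlow : ∀ i ≤ L, H (ω i) ≤ gammaStar rel H a b := fun i hi =>
    gammaStar_eq_commH ha ▸ hmax ▸ le_pathMax H ω hi
  refine (by positivity : (0 : ℝ) < 1 / (2 * L ^ 2)).trans_le ?_
  rw [thetaVP_eq_sInf_image]
  refine le_csInf ((nonempty_setOf_isThetaAdmissible hsymm ha).image _)
    (Set.forall_mem_image.2 fun f hf => ?_)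
  have hsum : ∑ _i ∈ Finset.range L, (1 / L : ℝ) ≤
      ∑ i ∈ Finset.range L, |f (ω i) - f (ω (i + 1))| := by
    calc ∑ _i ∈ Finset.range L, (1 / L : ℝ) = f (ω 0) - f (ω L) := by
          rw [h0, hL, hf.2.1 a (connIn_self (by simpa [Xss, ha] using hΓ)),
            hf.2.2.1 b (connIn_self hb), Finset.sum_const, Finset.card_range, nsmul_eq_mul,
            mul_one_div_cancel (Nat.cast_ne_zero.2 hLpos.ne')]
          norm_num
      _ = ∑ i ∈ Finset.range L, (f (ω i) - f (ω (i + 1))) :=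
          (Finset.sum_range_sub' (fun i => f (ω i)) L).symm
      _ ≤ _ := Finset.sum_le_sum fun i _ => le_abs_self _
  obtain ⟨i, hi, hle⟩ := Finset.exists_le_of_sum_le (Finset.nonempty_range_iff.2 hLpos.ne') hsum
  rw [Finset.mem_range] at hi
  have hedge := mul_sq_sub_le_edgeEnergy (w := limitConductance rel H (gammaStar rel H a b))
    (f := f) limitConductance_nonneg (ω i) (ω (i + 1))
  rw [limitConductance, if_pos ⟨hlow i hi.le, hlow (i + 1) hi, hstep i hi⟩, one_mul] at hedge
  calc 1 / (2 * L ^ 2 : ℝ) = (1 / L) ^ 2 / 2 := by ring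
    _ ≤ |f (ω i) - f (ω (i + 1))| ^ 2 / 2 := by gcongr
    _ ≤ _ := by rw [sq_abs]; linarith

end Theta

section Asymptotics
variable [Fintype X] {rel : X → X → Prop} {H : X → ℝ} {a b : X} {f : X → ℝ}

lemma IsThetaAdmissible.tendsto_edgeEnergy_scaledConductance (hsymm : Symmetric rel)
    (hf : IsThetaAdmissible rel H a b f) :
    Tendsto (fun β => edgeEnergy (scaledConductance rel H (gammaStar rel H a b) β) f) atTop
      (𝓝 (edgeEnergy (limitConductance rel H (gammaStar rel H a b)) f)) := by
  refine tendsto_edgeEnergy fun x y => ?_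
  by_cases hr : rel x y
  · rcases lt_or_ge (max (H x) (H y)) (gammaStar rel H a b) with hlt | hge
    · rw [hf.eq_of_rel hsymm ((le_max_left _ _).trans_lt hlt) ((le_max_right _ _).trans_lt hlt) hr]
      simp
    · exact (tendsto_scaledConductance hr hge).mul_const _
  · simp [scaledConductance, limitConductance, hr]

lemma eventually_scaledCap_lt (hsymm : Symmetric rel) (ha : H a = 0)
    (hΓ : 0 < gammaStar rel H a b) (hb : H b < gammaStar rel H a b) {c : ℝ}
    (hc : thetaVP rel H a b < c) : ∀ᶠ β in atTop,
      Real.exp (gammaStar rel H a b * β) * Zb H β * capB rel H β {a} {b} < c := by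
  have : Nonempty X := ⟨a⟩
  rw [thetaVP_eq_sInf_image] at hc
  obtain ⟨_, ⟨f, hf, rfl⟩, hfc⟩ :=
    exists_lt_of_csInf_lt ((nonempty_setOf_isThetaAdmissible hsymm ha).image _) hc
  have hfcap := hf.isCapAdmissible (by simpa [Xss, ha] using hΓ) hb
  filter_upwards [(hf.tendsto_edgeEnergy_scaledConductance hsymm).eventually_lt_const hfc]
    with β hβ
  exact (scaledCap_le hfcap).trans_lt hβ

lemma exists_thetaVP_le_add_of_oscillation_le [Nonempty X] (hsymm : Symmetric rel) (ha : H a = 0)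
    {ε : ℝ} (hε : 0 < ε) : ∃ d > 0, ∀ f, IsCapAdmissible {a} {b} f →
      (∀ x ∈ Xss rel H a b, ∀ y ∈ Xss rel H a b, rel x y → |f x - f y| ≤ d) →
      thetaVP rel H a b ≤ edgeEnergy (limitConductance rel H (gammaStar rel H a b)) f + ε := by
  obtain ⟨N, hN⟩ := exists_connIn_oscillation_le rel (Xss rel H a b)
  set S₀ := ∑ x, ∑ y, limitConductance rel H (gammaStar rel H a b) x y
  have hS₀ : 0 ≤ S₀ := Finset.sum_nonneg fun x _ => Finset.sum_nonneg fun y _ =>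
    limitConductance_nonneg x y
  refine ⟨ε / (2 * N * S₀ + 1), by positivity, fun f hf hedge => ?_⟩
  have hclose : ∀ x, |f (collapse rel H a b x) - f x| ≤ N * (ε / (2 * N * S₀ + 1)) := by
    intro x
    rcases collapse_eq_or_connIn hsymm x with h | h
    · rw [h, sub_self, abs_zero]
      positivity
    · rw [abs_sub_comm]
      exact hN f _ (by positivity) hedge _ _ h
  have hsmall : 2 * (N * (ε / (2 * N * S₀ + 1))) * S₀ ≤ ε := by
    rw [show 2 * (N * (ε / (2 * N * S₀ + 1))) * S₀ = 2 * N * S₀ * ε / (2 * N * S₀ + 1) by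
      ring, div_le_iff₀ (by positivity)]
    nlinarith
  calc thetaVP rel H a b
      ≤ edgeEnergy (limitConductance rel H (gammaStar rel H a b)) (f ∘ collapse rel H a b) :=
        thetaVP_le (hf.isThetaAdmissible_comp_collapse hsymm ha)
    _ ≤ edgeEnergy (limitConductance rel H (gammaStar rel H a b)) f +
          2 * (N * (ε / (2 * N * S₀ + 1))) * S₀ :=
        edgeEnergy_le_add_of_abs_sub_le limitConductance_nonneg hf.1 (fun x => hf.1 _) hclose
    _ ≤ _ := by linarith

lemma eventually_lt_scaledCap (hsymm : Symmetric rel) (hab : a ≠ b) (ha : H a = 0) {c : ℝ}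
    (hc : c < thetaVP rel H a b) : ∀ᶠ β in atTop,
      c < Real.exp (gammaStar rel H a b * β) * Zb H β * capB rel H β {a} {b} := by
  have : Nonempty X := ⟨a⟩
  set Γ := gammaStar rel H a b
  set Θ := thetaVP rel H a b
  obtain ⟨d, hd, hΘ⟩ := exists_thetaVP_le_add_of_oscillation_le (b := b) hsymm ha
    (ε := (Θ - c) / 2) (by linarith)
  obtain ⟨g, hg, hgap⟩ := exists_pos_le_sub_of_lt H Γ
  have hexp : Tendsto (fun β => d ^ 2 * Real.exp (β * g)) atTop atTop :=
    (Real.tendsto_exp_atTop.comp (tendsto_id.atTop_mul_const hg)).const_mul_atTop (by positivity)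
  filter_upwards [hexp.eventually_gt_atTop (2 * Θ), eventually_ge_atTop 0] with β hβ hβ0
  refine (by linarith : c < Θ - (Θ - c) / 2).trans_le
    (le_scaledCap (Set.disjoint_singleton.2 hab) fun f hf => ?_)
  have hlimit := edgeEnergy_mono (f := f)
    (limitConductance_le_scaledConductance (rel := rel) (H := H) (Γ := Γ) hβ0)
  by_cases hF : Θ ≤ edgeEnergy (scaledConductance rel H Γ β) f
  · linarith
  rw [not_le] at hF
  refine (sub_le_iff_le_add.2 (hΘ f hf fun x hx y hy hr => ?_)).trans (by linarith)
  have hw := exp_mul_le_scaledConductance hβ0 hr (hgap x hx) (hgap y hy)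
  have hterm := mul_sq_sub_le_edgeEnergy (w := scaledConductance rel H Γ β) (f := f)
    (scaledConductance_nonneg β) x y
  have hlt : Real.exp (β * g) * (f x - f y) ^ 2 < Real.exp (β * g) * d ^ 2 := by
    nlinarith [mul_le_mul_of_nonneg_right hw (sq_nonneg (f x - f y))]
  exact abs_le_of_sq_le_sq (lt_of_mul_lt_mul_left hlt (Real.exp_pos _).le).le hd.le

end Asymptotics

theorem stmt_18_general [Fintype X] (rel : X → X → Prop) (H : X → ℝ)
    (hsymm : Symmetric rel) (hconn : ConnGraph rel)
    (sq bx : X) (hne : sq ≠ bx) (Hsq : H sq = 0)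
    -- (H1): X_stab = {⊞}
    (hH1 : {η : X | ∀ ξ, H η ≤ H ξ} = {bx})
    (hΓ : 0 < gammaStar rel H sq bx) :
    0 < thetaVP rel H sq bx ∧
    Tendsto (fun β : ℝ =>
        Real.exp (gammaStar rel H sq bx * β) * Zb H β * capB rel H β {sq} {bx})
      atTop (nhds (thetaVP rel H sq bx)) := by
  have hbx : H bx < gammaStar rel H sq bx := by
    have hmin : bx ∈ {η : X | ∀ ξ, H η ≤ H ξ} := hH1 ▸ rfl
    linarith [hmin sq]
  exact ⟨thetaVP_pos hsymm hconn hne Hsq hΓ hbx, tendsto_order.2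
    ⟨fun c hc => eventually_lt_scaledCap hsymm hne Hsq hc,
      fun c hc => eventually_scaledCap_lt hsymm Hsq hΓ hbx hc⟩⟩

/-- under (H1)–(H2) and Γ* > 0, Θ ∈ (0,∞) and
lim_{β→∞} e^{Γ*β} Z_β CAP_β({□},{⊞}) = Θ. -/
theorem stmt_18 [Fintype X] (rel : X → X → Prop) (H : X → ℝ)
    (hsymm : Symmetric rel) (hconn : ConnGraph rel)
    (sq bx : X) (hne : sq ≠ bx) (Hsq : H sq = 0)
    -- (H1): X_stab = {⊞}
    (hH1 : {η : X | ∀ ξ, H η ≤ H ξ} = {bx})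
    -- (H2): ∃ V* < Γ* with V_η ≤ V* for all η ∉ {□,⊞}
    (hH2 : ∃ Vs : ℝ, Vs < gammaStar rel H sq bx ∧
      ∀ η : X, η ≠ sq → η ≠ bx →
        ({ξ : X | H ξ < H η}).Nonempty ∧
        commHS rel H {η} {ξ : X | H ξ < H η} - H η ≤ Vs)
    (hΓ : 0 < gammaStar rel H sq bx) :
    0 < thetaVP rel H sq bx ∧
    Tendsto (fun β : ℝ =>
        Real.exp (gammaStar rel H sq bx * β) * Zb H β * capB rel H β {sq} {bx})
      atTop (nhds (thetaVP rel H sq bx)) :=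
  stmt_18_general rel H hsymm hconn sq bx hne Hsq hH1 hΓ
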